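/- Let A be a ring satisfying the strong rank condition (no injective R-module map A^n → A^(n-1) exists for any n ≥ 1) which is torsion-free as a Z-module (where Z acts via Z·1_A). Then A is n-rigid for every n ≥ 1. -/
import Mathlib


/-- A ring `A` is `n`-rigid if every homomorphism of right `A`-modules
`Aⁿ → Aⁿ⁻¹` has infinite kernel (right modules as left `Aᵐᵒᵖ`-modules). -/
def IsRigid (A : Type*) [Ring A] (n : ℕ) : Prop :=
  ∀ f : (Fin n → A) →ₗ[Aᵐᵒᵖ] (Fin (n - 1) → A),
    (LinearMap.ker f : Set (Fin n → A)).Infinite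

/-- Let `A` be a ring satisfying the strong rank condition
(no injective right-`A`-module map `Aⁿ → Aⁿ⁻¹` for any `n ≥ 1`) which is
torsion-free as a `ℤ`-module.  Then `A` is `n`-rigid for every `n ≥ 1`. -/
theorem isRigid_of_strongRankCondition_of_torsionFree (A : Type*) [Ring A]
    (hsrc : ∀ n : ℕ, 1 ≤ n →
      ∀ f : (Fin n → A) →ₗ[Aᵐᵒᵖ] (Fin (n - 1) → A), ¬ Function.Injective f)
    (htf : ∀ m : ℤ, m ≠ 0 → ∀ a : A, a ≠ 0 → m • a ≠ 0) :
    ∀ n : ℕ, 1 ≤ n → IsRigid A n := by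
  intro n hn f
  have hni := hsrc n hn f
  rw [Function.not_injective_iff] at hni
  obtain ⟨a, b, hab, hne⟩ := hni
  set x : Fin n → A := a - b with hx
  have hx0 : x ≠ 0 := sub_ne_zero.mpr hne
  have hfx : f x = 0 := by simp [hx, map_sub, hab]
  obtain ⟨i, hi⟩ : ∃ i, x i ≠ 0 := by
    by_contra h
    push_neg at h
    exact hx0 (funext h)
  apply Set.infinite_of_injective_forall_mem (f := fun m : ℤ => m • x)
  · intro m m' hmm
    by_contra hne'
    have h1 : (m - m') • x i ≠ 0 := htf (m - m') (sub_ne_zero.mpr hne') (x i) hi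
    apply h1
    have : (m - m') • x = 0 := by
      rw [sub_smul]
      simp only at hmm
      rw [hmm, sub_self]
    calc (m - m') • x i = ((m - m') • x) i := rfl
      _ = 0 := by rw [this]; rfl
  · intro m
    show m • x ∈ LinearMap.ker f
    rw [LinearMap.mem_ker, map_zsmul, hfx, smul_zero]
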